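/- arXiv:2206.14725 — 3 statements merged into one kernel-verified Lean document; each statement's English description precedes it below -/
import Mathlib

section
/- Let D be a subset of a Euclidean space that is a finite union of convex polytopes. If D is not convex, then there exist a point β and two distinct points ξ₁, ξ₂ ∈ D at which the distance function y ↦ ‖y − β‖ restricted to D attains its minimum (so the minimum is attained at at least two points). -/
open Metric Set
open scoped RealInnerProductSpace

/-- Variational inequality: if `ξ ∈ K` (convex) is at minimal distance from `c`
among points of `K`, then `⟪c - ξ, w - ξ⟫ ≤ 0` for all `w ∈ K`. -/
lemma aux_var_ineq {n : ℕ} {K : Set (EuclideanSpace ℝ (Fin n))} (hK : Convex ℝ K)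
    {c ξ : EuclideanSpace ℝ (Fin n)} (hξ : ξ ∈ K)
    (hmin : ∀ w ∈ K, dist c ξ ≤ dist c w) {w : EuclideanSpace ℝ (Fin n)} (hw : w ∈ K) :
    ⟪c - ξ, w - ξ⟫ ≤ 0 := by
  by_contra h
  push_neg at h
  set I : ℝ := ⟪c - ξ, w - ξ⟫ with hI
  set M : ℝ := ‖w - ξ‖ ^ 2 with hM
  have hM0 : 0 ≤ M := by positivity
  set θ : ℝ := I / (M + I + 1) with hθ
  have hθ0 : 0 < θ := by positivity
  have hθ1 : θ ≤ 1 := by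
    rw [hθ, div_le_one (by linarith)]
    linarith
  have hmem : (1 - θ) • ξ + θ • w ∈ K := hK hξ hw (by linarith) (le_of_lt hθ0) (by ring)
  have hd := hmin _ hmem
  have hexp : dist c ((1 - θ) • ξ + θ • w) ^ 2
      = dist c ξ ^ 2 - 2 * θ * I + θ ^ 2 * M := by
    rw [dist_eq_norm, dist_eq_norm]
    have : c - ((1 - θ) • ξ + θ • w) = (c - ξ) - θ • (w - ξ) := by
      module
    rw [this, norm_sub_sq_real, real_inner_smul_right, norm_smul, hI, hM]
    simp [mul_pow, abs_of_nonneg hθ0.le]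
    ring
  have hsq : dist c ξ ^ 2 ≤ dist c ((1 - θ) • ξ + θ • w) ^ 2 :=
    pow_le_pow_left₀ dist_nonneg hd 2
  rw [hexp] at hsq
  have h1 : 2 * I ≤ θ * M := by nlinarith
  have h2 : θ * M < I := by
    rw [hθ, div_mul_eq_mul_div, div_lt_iff₀ (by linarith)]
    nlinarith
  linarith

set_option maxHeartbeats 1000000 in
/-- If `D ⊆ ℝⁿ` is a finite union of compact convex polytopes and `D` is not convex,
then there are a center `β` and a radius `r > 0` such that the distance function to `β`
attains its minimum `r` on `D` in at least two distinct points. -/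
theorem nonconvex_union_of_polytopes_two_nearest {n : ℕ}
    (k : ℕ) (F : Fin k → Finset (EuclideanSpace ℝ (Fin n)))
    (D : Set (EuclideanSpace ℝ (Fin n)))
    (hD : D = ⋃ i, convexHull ℝ (F i : Set (EuclideanSpace ℝ (Fin n))))
    (hnc : ¬ Convex ℝ D) :
    ∃ (β : EuclideanSpace ℝ (Fin n)) (r : ℝ), 0 < r ∧
      ∃ ξ₁ ∈ D, ∃ ξ₂ ∈ D, ξ₁ ≠ ξ₂ ∧ ‖ξ₁ - β‖ = r ∧ ‖ξ₂ - β‖ = r ∧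
        ∀ y ∈ D, r ≤ ‖y - β‖ := by
  classical
  simp only [Convex, StarConvex] at hnc
  push_neg at hnc
  obtain ⟨x, hx, y, hy, a, b, ha, hb, hab, hz⟩ := hnc
  set z := a • x + b • y with hzdef
  -- compactness of D
  have hDcomp : IsCompact D := by
    rw [hD]
    exact isCompact_iUnion fun i => ((F i).finite_toSet).isCompact_convexHull ℝ
  have hDclosed : IsClosed D := hDcomp.isClosed
  have hDne : D.Nonempty := ⟨x, hx⟩
  set r₀ := infDist z D with hr₀def
  have hr₀ : 0 < r₀ := (hDclosed.notMem_iff_infDist_pos hDne).1 hz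
  set A : Set (EuclideanSpace ℝ (Fin n)) := {β | infDist β D = dist β z + r₀} with hAdef
  have hzA : z ∈ A := by simp [hAdef, hr₀def]
  have hAclosed : IsClosed A :=
    isClosed_eq (continuous_infDist_pt D)
      ((continuous_id.dist continuous_const).add continuous_const)
  -- A is bounded
  set R := (a * ‖x - z‖ ^ 2 + b * ‖y - z‖ ^ 2) / (2 * r₀) with hRdef
  have hAsub : A ⊆ closedBall z R := by
    intro β hβ
    have hβ' : infDist β D = dist β z + r₀ := hβ
    have hkey : ∀ p ∈ D, 2 * ⟪β - z, p - z⟫ ≤ ‖p - z‖ ^ 2 - 2 * dist β z * r₀ := by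
      intro p hp
      have h1 : dist β z + r₀ ≤ dist β p := hβ' ▸ infDist_le_dist_of_mem hp
      have h2 : (dist β z + r₀) ^ 2 ≤ dist β p ^ 2 :=
        pow_le_pow_left₀ (by positivity) h1 2
      have h3 : dist β p ^ 2 = dist β z ^ 2 - 2 * ⟪β - z, p - z⟫ + ‖p - z‖ ^ 2 := by
        rw [dist_eq_norm, dist_eq_norm]
        have he : β - p = (β - z) - (p - z) := by abel
        rw [he, norm_sub_sq_real]
      nlinarith [hr₀]
    have hxk := hkey x hx
    have hyk := hkey y hy
    have hcomb : a • (x - z) + b • (y - z) = 0 := by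
      have hstep : a • (x - z) + b • (y - z) = (a • x + b • y) - (a + b) • z := by
        module
      rw [hstep, hab, one_smul, ← hzdef, sub_self]
    have hzero : a * ⟪β - z, x - z⟫ + b * ⟪β - z, y - z⟫ = 0 := by
      have : ⟪β - z, a • (x - z) + b • (y - z)⟫ = (0 : ℝ) := by
        rw [hcomb, inner_zero_right]
      rwa [inner_add_right, real_inner_smul_right, real_inner_smul_right] at this
    have hzero2 : a * (2 * ⟪β - z, x - z⟫) + b * (2 * ⟪β - z, y - z⟫) = 0 := by
      linear_combination 2 * hzero
    have hsum := add_le_add (mul_le_mul_of_nonneg_left hxk ha)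
      (mul_le_mul_of_nonneg_left hyk hb)
    have he : a * (2 * dist β z * r₀) + b * (2 * dist β z * r₀) = 2 * dist β z * r₀ := by
      linear_combination (2 * dist β z * r₀) * hab
    rw [mem_closedBall, hRdef, le_div_iff₀ (by positivity)]
    nlinarith [hsum, hzero2, he]
  have hAcomp : IsCompact A :=
    (isCompact_closedBall z R).of_isClosed_subset hAclosed hAsub
  obtain ⟨β, hβA, hβmax⟩ :=
    hAcomp.exists_isMaxOn (f := fun c => dist c z) ⟨z, hzA⟩
      (Continuous.continuousOn (continuous_id.dist continuous_const))
  have hβA' : infDist β D = dist β z + r₀ := hβA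
  set r := infDist β D with hrdef
  clear_value r
  have hrpos : 0 < r := by
    rw [hβA']
    have := dist_nonneg (x := β) (y := z)
    linarith
  obtain ⟨ξ, hξD, hξdist⟩ := hDcomp.exists_infDist_eq_dist hDne β
  have hβξ : dist β ξ = r := by rw [hrdef]; exact hξdist.symm
  by_cases htwo : ∃ p ∈ D, ∃ q ∈ D, p ≠ q ∧ dist β p = r ∧ dist β q = r
  · obtain ⟨p, hp, q, hq, hpq, hpr, hqr⟩ := htwo
    refine ⟨β, r, hrpos, p, hp, q, hq, hpq, ?_, ?_, ?_⟩
    · rw [← dist_eq_norm, dist_comm]; exact hpr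
    · rw [← dist_eq_norm, dist_comm]; exact hqr
    · intro w hw
      rw [← dist_eq_norm, dist_comm]
      exact hrdef ▸ infDist_le_dist_of_mem hw
  · exfalso
    have huniq : ∀ p ∈ D, dist β p = r → p = ξ := by
      intro p hp hpr
      by_contra hne
      exact htwo ⟨p, hp, ξ, hξD, hne, hpr, hβξ⟩
    haveI : Nonempty (Fin k) := by
      rw [hD] at hx
      obtain ⟨i, -⟩ := Set.mem_iUnion.1 hx
      exact ⟨i⟩
    set P : Fin k → Set (EuclideanSpace ℝ (Fin n)) :=
      fun i => convexHull ℝ (F i : Set (EuclideanSpace ℝ (Fin n))) with hPdef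
    have hPD : ∀ i, P i ⊆ D := by
      intro i
      rw [hD]
      exact Set.subset_iUnion (fun j => convexHull ℝ (F j : Set (EuclideanSpace ℝ (Fin n)))) i
    set g : Fin k → ℝ :=
      fun i => if ξ ∈ P i ∨ ¬ (P i).Nonempty then r + 1 else infDist β (P i) with hgdef
    clear_value g
    have hg : ∀ i, r < g i := by
      intro i
      by_cases hcase : ξ ∈ P i ∨ ¬ (P i).Nonempty
      · simp only [hgdef, hcase, if_true]
        linarith
      · push_neg at hcase
        obtain ⟨hξi, hne⟩ := hcase
        have hcond : ¬(ξ ∈ P i ∨ ¬(P i).Nonempty) := not_or.mpr ⟨hξi, not_not_intro hne⟩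
        have hgi : g i = infDist β (P i) := by
          simp only [hgdef]
          rw [if_neg hcond]
        rw [hgi]
        obtain ⟨p, hpPi, hpd⟩ :=
          ((F i).finite_toSet.isCompact_convexHull ℝ).exists_infDist_eq_dist hne β
        have hpD : p ∈ D := hPD i hpPi
        have h1 : r ≤ dist β p := hrdef ▸ infDist_le_dist_of_mem hpD
        rcases h1.lt_or_eq with hlt | heq
        · rw [hpd]; exact hlt
        · exact absurd (huniq p hpD heq.symm ▸ hpPi) (by rwa [huniq p hpD heq.symm] at hpPi)
    obtain ⟨i₀, hi₀⟩ := Finite.exists_min g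
    set ε := (g i₀ - r) / 2 with hεdef
    clear_value ε
    have hεpos : 0 < ε := by
      have := hg i₀
      rw [hεdef]; linarith
    set u := (r⁻¹ : ℝ) • (β - ξ) with hudef
    clear_value u
    have hu : ‖u‖ = 1 := by
      rw [hudef, norm_smul, ← dist_eq_norm, hβξ, Real.norm_eq_abs,
        abs_of_nonneg (inv_nonneg.2 hrpos.le)]
      field_simp
    set β' := β + ε • u with hβ'def
    clear_value β'
    have hββ' : dist β β' = ε := by
      rw [hβ'def, dist_eq_norm]
      simp [norm_smul, hu, abs_of_nonneg hεpos.le]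
    have hmain : ∀ w ∈ D, r + ε ≤ dist β' w := by
      intro w hw
      rw [hD] at hw
      obtain ⟨i, hwi⟩ := Set.mem_iUnion.1 hw
      have hwi : w ∈ P i := hwi
      have hwD : w ∈ D := hPD i hwi
      by_cases hξi : ξ ∈ P i
      · -- variational inequality case
        have hVI : ⟪β - ξ, w - ξ⟫ ≤ 0 := by
          refine aux_var_ineq (convex_convexHull ℝ _) hξi ?_ hwi
          intro v hv
          rw [hβξ]
          exact hrdef ▸ infDist_le_dist_of_mem (hPD i hv)
        have hiwu : ⟪w - β, u⟫ ≤ -r := by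
          have hsplit : (w - β : EuclideanSpace ℝ (Fin n)) = (w - ξ) - (β - ξ) := by abel
          rw [hudef, real_inner_smul_right, hsplit, inner_sub_left,
            real_inner_self_eq_norm_sq]
          have hn : ‖β - ξ‖ = r := by rw [← dist_eq_norm]; exact hβξ
          rw [real_inner_comm] at hVI
          rw [hn]
          have hr' : (0:ℝ) < r⁻¹ := inv_pos.2 hrpos
          have : ⟪w - ξ, β - ξ⟫ - r ^ 2 ≤ -r ^ 2 := by linarith
          calc r⁻¹ * (⟪w - ξ, β - ξ⟫ - r ^ 2) ≤ r⁻¹ * (-r ^ 2) := by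
                exact mul_le_mul_of_nonneg_left this hr'.le
            _ = -r := by field_simp
        have hsq : (r + ε) ^ 2 ≤ dist β' w ^ 2 := by
          have hexp : dist β' w ^ 2
              = dist β w ^ 2 - 2 * ε * ⟪w - β, u⟫ + ε ^ 2 := by
            rw [dist_eq_norm', dist_eq_norm']
            have he : w - β' = (w - β) - ε • u := by rw [hβ'def]; abel
            rw [he, norm_sub_sq_real, real_inner_smul_right, norm_smul, hu]
            simp [abs_of_nonneg hεpos.le]
            ring
          have hdr : r ≤ dist β w := hrdef ▸ infDist_le_dist_of_mem hwD
          nlinarith [hiwu, hεpos, hrpos]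
        exact (pow_le_pow_iff_left₀ (by linarith : (0:ℝ) ≤ r + ε)
          (dist_nonneg (x := β') (y := w)) two_ne_zero).1 hsq
      · -- far polytope case
        have hne : (P i).Nonempty := ⟨w, hwi⟩
        have hcond : ¬(ξ ∈ P i ∨ ¬(P i).Nonempty) := not_or.mpr ⟨hξi, not_not_intro hne⟩
        have hgi : g i = infDist β (P i) := by
          simp only [hgdef]
          rw [if_neg hcond]
        have h1 : r + 2 * ε ≤ infDist β (P i) := by
          rw [← hgi]
          have := hi₀ i
          rw [hεdef]; linarith
        have h2 : infDist β (P i) ≤ dist β w := infDist_le_dist_of_mem hwi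
        have h3 : dist β w ≤ dist β β' + dist β' w := dist_triangle β β' w
        rw [hββ'] at h3
        linarith
    -- β' is in A and strictly farther from z
    have hup : infDist β' D ≤ dist β' z + r₀ := by
      calc infDist β' D ≤ infDist z D + dist β' z :=
            infDist_le_infDist_add_dist (x := β') (y := z) (s := D)
        _ = dist β' z + r₀ := by rw [← hr₀def, add_comm]
    have hlow : r + ε ≤ infDist β' D := by
      by_contra hcon
      push_neg at hcon
      obtain ⟨w, hw, hlt⟩ := (infDist_lt_iff hDne).1 hcon
      exact absurd (hmain w hw) (by linarith)
    have hdz : dist β' z ≤ dist β z + ε := by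
      have := dist_triangle β' β z
      rw [dist_comm β' β, hββ'] at this
      linarith
    have hrr : r = dist β z + r₀ := hβA'
    have heq1 : dist β' z = dist β z + ε := by linarith
    have hβ'A : β' ∈ A := by
      have hh : infDist β' D = dist β' z + r₀ := by
        apply le_antisymm hup
        rw [heq1]
        linarith
      simp only [hAdef, Set.mem_setOf_eq]
      exact hh
    have hcontra := isMaxOn_iff.1 hβmax β' hβ'A
    rw [heq1] at hcontra
    linarith
end

section
/- Let x : ℝ → X be a curve in a Riemannian manifold and f : X → ℝ a smooth function with x'(t) = −(grad f)(x(t)). Suppose there exist constants α > 0, ½ < γ < 1, and a Łojasiewicz-type estimate ‖grad f(x(t))‖ ≥ α⁻¹ |f(x(t)) − f_∞|^γ for t ≥ T. Then the limit x_∞ = lim_{t→∞} x(t) exists and d(x(t), x_∞) ≤ (α/(1−γ)) (f(x(t)) − f_∞)^{1−γ} for t > T. -/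
open Filter Set Topology

/-!
Along the flow the energy `g t = f (x t) - finf` decreases at rate `‖x'‖²`. Where `g > 0`,
the Łojasiewicz inequality turns this into `‖x'‖ ≤ -φ'` for `φ = α / (1 - γ) * g ^ (1 - γ)`;
where `g` vanishes it has a minimum, so the flow has stopped. Hence the length of the curve
after time `a` is at most `φ a`: the curve has finite length, so it is Cauchy and converges,
with the stated distance bound.
-/

theorem HasGradientAt.comp_hasDerivAt {X : Type*} [NormedAddCommGroup X]
    [InnerProductSpace ℝ X] [CompleteSpace X] {f : X → ℝ} {g v : X} {x : ℝ → X} {t : ℝ}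
    (hf : HasGradientAt f g (x t)) (hx : HasDerivAt x v t) :
    HasDerivAt (fun s => f (x s)) (inner ℝ g v) t := by
  have h : HasDerivAt (fun s => f (x s)) (InnerProductSpace.toDual ℝ X g v) t :=
    hf.hasFDerivAt.comp_hasDerivAt t hx
  rwa [InnerProductSpace.toDual_apply_apply] at h

theorem exists_tendsto_dist_le_of_dist_le_sub {ι α : Type*} [SemilatticeSup ι]
    [PseudoMetricSpace α] [CompleteSpace α] {x : ι → α} {φ : ι → ℝ} {T : ι}
    (hφ : ∀ t, T ≤ t → 0 ≤ φ t)
    (hdist : ∀ a b, T ≤ a → a ≤ b → dist (x a) (x b) ≤ φ a - φ b) :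
    ∃ xinf, Tendsto x atTop (𝓝 xinf) ∧ ∀ t, T ≤ t → dist (x t) xinf ≤ φ t := by
  have : Nonempty ι := ⟨T⟩
  have hcauchy : CauchySeq x := by
    rw [Metric.cauchySeq_iff']
    intro ε hε
    have hbdd : BddBelow (range fun t : Ici T => φ t) :=
      ⟨0, by rintro _ ⟨t, rfl⟩; exact hφ t t.2⟩
    obtain ⟨⟨N, hTN⟩, hN⟩ :=
      exists_lt_of_ciInf_lt (lt_add_of_pos_right (⨅ t : Ici T, φ t) hε)
    refine ⟨N, fun n hn => ?_⟩
    have hinf : ⨅ t : Ici T, φ t ≤ φ n := ciInf_le hbdd ⟨n, hTN.trans hn⟩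
    calc dist (x n) (x N) = dist (x N) (x n) := dist_comm _ _
      _ ≤ φ N - φ n := hdist N n hTN hn
      _ < ε := by linarith
  obtain ⟨xinf, hlim⟩ := cauchySeq_tendsto_of_complete hcauchy
  refine ⟨xinf, hlim, fun t ht => le_of_tendsto (tendsto_const_nhds.dist hlim) ?_⟩
  filter_upwards [eventually_ge_atTop t] with b hb
  linarith [hdist t b ht hb, hφ b (ht.trans hb)]

theorem eq_zero_of_isLocalMin_of_hasDerivAt_neg_norm_sq {E : Type*}
    [NormedAddCommGroup E] {g : ℝ → ℝ} {w : E} {s : ℝ} (hmin : IsLocalMin g s)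
    (hg : HasDerivAt g (-‖w‖ ^ 2) s) :
    w = 0 := by
  simpa using hmin.hasDerivAt_eq_zero hg

section Lojasiewicz

variable {E : Type*} [NormedAddCommGroup E] {v : ℝ → E} {g : ℝ → ℝ}
  {α γ : ℝ}

theorem antitone_of_hasDerivAt_neg_norm_sq (hg : ∀ t, HasDerivAt g (-‖v t‖ ^ 2) t) :
    Antitone g :=
  antitone_of_hasDerivAt_nonpos hg fun _ => neg_nonpos.2 (sq_nonneg _)

theorem eq_zero_of_hasDerivAt_neg_norm_sq_of_eq_zero (hg : ∀ t, HasDerivAt g (-‖v t‖ ^ 2) t)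
    (hg0 : ∀ t, 0 ≤ g t) {s : ℝ} (hs : g s = 0) : v s = 0 :=
  eq_zero_of_isLocalMin_of_hasDerivAt_neg_norm_sq
    (Eventually.of_forall fun u => hs ▸ hg0 u) (hg s)

theorem hasDerivWithinAt_lojasiewicz (hγ1 : γ < 1) (hg : ∀ t, HasDerivAt g (-‖v t‖ ^ 2) t)
    (hg0 : ∀ t, 0 ≤ g t) (s : ℝ) :
    HasDerivWithinAt (fun t => α / (1 - γ) * g t ^ (1 - γ))
      (-(α * g s ^ (-γ) * ‖v s‖ ^ 2)) (Ici s) s := by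
  have h1γ : 1 - γ ≠ 0 := by linarith
  rcases (hg0 s).eq_or_lt with hs | hs
  · have hvanish : ∀ u ∈ Ici s, α / (1 - γ) * g u ^ (1 - γ) = 0 := fun u hu => by
      rw [le_antisymm (hs ▸ antitone_of_hasDerivAt_neg_norm_sq hg hu) (hg0 u),
        Real.zero_rpow h1γ, mul_zero]
    rw [eq_zero_of_hasDerivAt_neg_norm_sq_of_eq_zero hg hg0 hs.symm]
    simpa using
      (hasDerivWithinAt_const s (Ici s) (0 : ℝ)).congr hvanish (hvanish s self_mem_Ici)
  · refine (((hg s).rpow_const (Or.inl hs.ne')).const_mul _).hasDerivWithinAt.congr_deriv ?_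
    rw [show 1 - γ - 1 = -γ by ring]
    field_simp

theorem norm_le_of_lojasiewicz (hα : 0 < α) (hg : ∀ t, HasDerivAt g (-‖v t‖ ^ 2) t)
    (hg0 : ∀ t, 0 ≤ g t) {s : ℝ} (hloja : α⁻¹ * g s ^ γ ≤ ‖v s‖) :
    ‖v s‖ ≤ α * g s ^ (-γ) * ‖v s‖ ^ 2 := by
  rcases (hg0 s).eq_or_lt with hs | hs
  · simp [eq_zero_of_hasDerivAt_neg_norm_sq_of_eq_zero hg hg0 hs.symm]
  · have hgγ : 0 < g s ^ γ := Real.rpow_pos_of_pos hs γ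
    have hone : 1 ≤ α * g s ^ (-γ) * ‖v s‖ := by
      rw [Real.rpow_neg hs.le]
      calc (1 : ℝ) = α * (g s ^ γ)⁻¹ * (α⁻¹ * g s ^ γ) := by field_simp
        _ ≤ α * (g s ^ γ)⁻¹ * ‖v s‖ := by gcongr
    nlinarith [norm_nonneg (v s)]

theorem dist_le_of_lojasiewicz [NormedSpace ℝ E] {x : ℝ → E} {T a b : ℝ} (hα : 0 < α)
    (hγ1 : γ < 1)
    (hx : ∀ t, HasDerivAt x (v t) t) (hg : ∀ t, HasDerivAt g (-‖v t‖ ^ 2) t)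
    (hg0 : ∀ t, 0 ≤ g t) (hloja : ∀ t, T ≤ t → α⁻¹ * g t ^ γ ≤ ‖v t‖)
    (hTa : T ≤ a) (hab : a ≤ b) :
    dist (x a) (x b) ≤ α / (1 - γ) * g a ^ (1 - γ) - α / (1 - γ) * g b ^ (1 - γ) := by
  have hgc : Continuous g := continuous_iff_continuousAt.2 fun t => (hg t).continuousAt
  have hxc : Continuous x := continuous_iff_continuousAt.2 fun t => (hx t).continuousAt
  have hφc : Continuous fun t => α / (1 - γ) * g t ^ (1 - γ) :=
    continuous_const.mul (hgc.rpow_const fun _ => Or.inr (by linarith))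
  rw [dist_comm, dist_eq_norm]
  exact image_norm_le_of_norm_deriv_right_le_deriv_boundary' (f := fun t => x t - x a)
    (B := fun t => α / (1 - γ) * g a ^ (1 - γ) - α / (1 - γ) * g t ^ (1 - γ))
    (hxc.sub continuous_const).continuousOn
    (fun s _ => ((hx s).sub_const (x a)).hasDerivWithinAt) (by simp)
    (continuous_const.sub hφc).continuousOn
    (fun s _ => by simpa using (hasDerivWithinAt_lojasiewicz hγ1 hg hg0 s).const_sub _)
    (fun s hs => norm_le_of_lojasiewicz hα hg hg0 (hloja s (hTa.trans hs.1)))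
    (right_mem_Icc.2 hab)

end Lojasiewicz

theorem gradient_flow_convergence_general {X : Type*}
    [NormedAddCommGroup X] [InnerProductSpace ℝ X] [CompleteSpace X]
    (f : X → ℝ) (gf : X → X) (hf : ∀ y, HasGradientAt f (gf y) y)
    (x : ℝ → X) (hx : ∀ t, HasDerivAt x (-gf (x t)) t)
    (α γ T finf : ℝ) (hα : 0 < α) (hγ1 : γ < 1)
    (hbelow : ∀ t, T ≤ t → finf ≤ f (x t))
    (hloja : ∀ t, T ≤ t → α⁻¹ * (f (x t) - finf) ^ γ ≤ ‖gf (x t)‖) :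
    ∃ xinf : X, Tendsto x atTop (nhds xinf) ∧
      ∀ t, T < t → dist (x t) xinf ≤ α / (1 - γ) * (f (x t) - finf) ^ (1 - γ) := by
  have hg : ∀ t, HasDerivAt (fun t => f (x t) - finf) (-‖-gf (x t)‖ ^ 2) t := fun t => by
    simpa [inner_neg_right, real_inner_self_eq_norm_sq] using
      ((hf (x t)).comp_hasDerivAt (hx t)).sub_const finf
  have hg0 : ∀ t, 0 ≤ f (x t) - finf := fun t => by
    rcases le_total T t with h | h
    · exact sub_nonneg.2 (hbelow t h)
    · exact (sub_nonneg.2 (hbelow T le_rfl)).trans (antitone_of_hasDerivAt_neg_norm_sq hg h)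
  have h1γ : 0 < 1 - γ := by linarith
  obtain ⟨xinf, hlim, hdist⟩ := exists_tendsto_dist_le_of_dist_le_sub
    (fun t _ => mul_nonneg (div_pos hα h1γ).le (Real.rpow_nonneg (hg0 t) _))
    (fun a b ha hab => dist_le_of_lojasiewicz hα hγ1 hx hg hg0
      (fun t ht => (norm_neg (gf (x t))).symm ▸ hloja t ht) ha hab)
  exact ⟨xinf, hlim, fun t ht => hdist t ht.le⟩

/-- Łojasiewicz-type convergence of the negative gradient flow: if `x' = −grad f(x)`,
`f(x t) ≥ f∞`, and `‖grad f (x t)‖ ≥ α⁻¹ (f (x t) − f∞)^γ` for `t ≥ T` with `α > 0`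
and `½ < γ < 1`, then `x t` converges to some `x∞` and
`dist (x t) x∞ ≤ (α/(1−γ)) (f (x t) − f∞)^{1−γ}` for `t > T`. -/
theorem gradient_flow_convergence {X : Type*}
    [NormedAddCommGroup X] [InnerProductSpace ℝ X] [CompleteSpace X]
    (f : X → ℝ) (gf : X → X) (hf : ∀ y, HasGradientAt f (gf y) y)
    (x : ℝ → X) (hx : ∀ t, HasDerivAt x (-gf (x t)) t)
    (α γ T finf : ℝ) (hα : 0 < α) (hγ : 1 / 2 < γ) (hγ1 : γ < 1)
    (hbelow : ∀ t, T ≤ t → finf ≤ f (x t))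
    (hloja : ∀ t, T ≤ t → α⁻¹ * (f (x t) - finf) ^ γ ≤ ‖gf (x t)‖) :
    ∃ xinf : X, Tendsto x atTop (nhds xinf) ∧
      ∀ t, T < t → dist (x t) xinf ≤ α / (1 - γ) * (f (x t) - finf) ^ (1 - γ) :=
  gradient_flow_convergence_general f gf hf x hx α γ T finf hα hγ1 hbelow hloja
end

section
/- Let g : ℝ → G be a curve in a Lie group G acting smoothly on a manifold X, satisfying g(0) = e and g(t)⁻¹ g'(t) = β_X-data in the sense that the curve x(t) := g(t)⁻¹ · x₀ satisfies x'(t) = −(β(x(t)))_X(x(t)) where β(y) = μ_p(y). Then the negative gradient flow line of f_p = ½‖μ_p‖² through x₀ stays in the G-orbit of x₀: x(t) = g(t)⁻¹ x₀ for all t. -/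
/-- If `v` is a Lipschitz vector field (the gradient field of `f_p`), `y` is the negative
gradient flow line through `x₀`, and `g : ℝ → G` satisfies `g 0 = 1` together with the
property that `t ↦ g(t)⁻¹ • x₀` also solves the negative gradient flow equation, then
`y t = g(t)⁻¹ • x₀` for all `t`; in particular the flow line stays in the `G`-orbit of `x₀`. -/
theorem gradient_flow_in_orbit {G X : Type*} [Group G]
    [NormedAddCommGroup X] [NormedSpace ℝ X] [MulAction G X]
    (L : NNReal) (v : X → X) (hv : LipschitzWith L v)
    (x₀ : X) (y : ℝ → X) (hy0 : y 0 = x₀)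
    (hy : ∀ t, HasDerivAt y (-v (y t)) t)
    (g : ℝ → G) (hg0 : g 0 = 1)
    (hg : ∀ t : ℝ, HasDerivAt (fun s => (g s)⁻¹ • x₀) (-v ((g t)⁻¹ • x₀)) t) :
    ∀ t : ℝ, y t = (g t)⁻¹ • x₀ ∧ y t ∈ MulAction.orbit G x₀ := by
  have h_eq : y = fun t => (g t)⁻¹ • x₀ :=
    ODE_solution_unique_univ (v := fun _ => -v) (s := fun _ => Set.univ) (t₀ := 0)
      (fun _ => hv.neg.lipschitzOnWith) (fun t => ⟨hy t, trivial⟩) (fun t => ⟨hg t, trivial⟩)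
      (by simp [hy0, hg0])
  intro t
  rw [h_eq]
  exact ⟨rfl, (g t)⁻¹, rfl⟩
end
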